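/- arXiv:1408.2059 — 3 statements merged into one kernel-verified Lean document; each statement's English description precedes it below -/
import Mathlib

section
/- The algebra Cir_{n,λ}(F_q) of λ-vector-circulant matrices is isomorphic as an F_q-algebra to F_q[x]/⟨x^n - λ(x)⟩, where λ(x) = λ₀ + λ₁x + ... + λ_{n-1}x^{n-1}, via the map cir_λ(a₀, ..., a_{n-1}) ↦ a₀ + a₁x + ... + a_{n-1}x^{n-1} mod (x^n - λ(x)). -/
/-! The shift `vecShift lam` is right multiplication by `T = Tmat lam`, so row `i` of `cir lam a`
is `a ᵥ* T ^ i`. Row `0` of `T ^ k` is the unit vector `e_k` for `k < n`, and `lam` for `k = n`.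
Hence a matrix commuting with `T` is the circulant of its row `0`; this gives
`cir lam a = a(T)` and `T ^ n = lam(T)`. Since row `0` of `q(T)` is the coefficient vector of `q`
when `deg q < n`, no nonzero polynomial of degree `< n` kills `T`, so `X ^ n - lam(X)` is the
minimal polynomial of `T`, and `F[X] ⧸ (minpoly F T) ≃ F[T]`. -/

open Matrix Polynomial

/-- The λ-vector-cyclic shift on F^n. -/
def vecShift {F : Type*} [Field F] {n : ℕ} (lam : Fin n → F) (v : Fin n → F) :
    Fin n → F := fun i =>
  (if _h : (i : ℕ) = 0 then 0 else v ⟨(i : ℕ) - 1, by have := i.isLt; omega⟩)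
    + v ⟨n - 1, by have := i.isLt; omega⟩ * lam i

/-- The companion-type matrix T_λ. -/
def Tmat {F : Type*} [Field F] {n : ℕ} (lam : Fin n → F) :
    Matrix (Fin n) (Fin n) F :=
  Matrix.of fun i j =>
    if (i : ℕ) = n - 1 then lam j
    else if (i : ℕ) + 1 = (j : ℕ) then 1 else 0

/-- The λ-vector-circulant matrix with first row `a`. -/
def cir {F : Type*} [Field F] {n : ℕ} (lam a : Fin n → F) :
    Matrix (Fin n) (Fin n) F :=
  Matrix.of fun i j => (vecShift lam)^[(i : ℕ)] a j

theorem commute_aeval_self {R A : Type*} [CommSemiring R] [Semiring A] [Algebra R A]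
    (x : A) (p : R[X]) : Commute x (aeval x p) := by
  show x * _ = _ * x
  simpa only [map_mul, aeval_X] using congrArg (aeval x) (X_mul : X * p = p * X)

section AdjoinSingleton

variable {K A : Type*} [Field K] [Ring A] [Algebra K A] (x : A)

noncomputable def aevalAdjoinSingleton : K[X] →ₐ[K] Algebra.adjoin K {x} :=
  (aeval x).codRestrict _ fun q => Algebra.adjoin_singleton_eq_range_aeval K x ▸ ⟨q, rfl⟩

theorem aevalAdjoinSingleton_surjective :
    Function.Surjective (aevalAdjoinSingleton (K := K) x) := by
  rintro ⟨y, hy⟩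
  rw [Algebra.adjoin_singleton_eq_range_aeval] at hy
  obtain ⟨q, rfl⟩ := hy
  exact ⟨q, rfl⟩

theorem ker_aevalAdjoinSingleton :
    RingHom.ker (aevalAdjoinSingleton (K := K) x) = Ideal.span {minpoly K x} := by
  ext q
  rw [Ideal.mem_span_singleton, minpoly.dvd_iff, RingHom.mem_ker, ← Subtype.coe_inj]
  rfl

/-- Unlike `AlgEquiv.adjoinSingletonEquivAdjoinRootMinpoly`, this does not need `A` commutative. -/
noncomputable def quotientSpanEquivAdjoinSingleton {p : K[X]} (hp : minpoly K x = p) :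
    (K[X] ⧸ Ideal.span {p}) ≃ₐ[K] Algebra.adjoin K {x} :=
  (Ideal.quotientEquivAlgOfEq K (by rw [← hp, ker_aevalAdjoinSingleton])).trans
    (Ideal.quotientKerAlgEquivOfSurjective (aevalAdjoinSingleton_surjective x))

theorem coe_quotientSpanEquivAdjoinSingleton_mk {p : K[X]} (hp : minpoly K x = p) (q : K[X]) :
    (quotientSpanEquivAdjoinSingleton x hp (Ideal.Quotient.mk _ q) : A) = aeval x q := by
  rw [quotientSpanEquivAdjoinSingleton, AlgEquiv.trans_apply, Ideal.quotientEquivAlgOfEq_mk,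
    Ideal.quotientKerAlgEquivOfSurjective_mk]
  rfl

end AdjoinSingleton

section Circulant

variable {F : Type*} [Field F] {n : ℕ} (lam : Fin n → F)

theorem vecMul_Tmat (v : Fin n → F) : v ᵥ* Tmat lam = vecShift lam v := by
  ext ⟨j, hj⟩
  obtain ⟨m, rfl⟩ : ∃ m, n = m + 1 := ⟨n - 1, by omega⟩
  have hrow (k : Fin m) : Tmat lam k.castSucc ⟨j, hj⟩ = if (k : ℕ) + 1 = j then 1 else 0 := by
    simp [Tmat, k.isLt.ne]
  rw [vecMul, dotProduct, Fin.sum_univ_castSucc, vecShift]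
  congr 1
  · simp only [hrow, mul_ite, mul_one, mul_zero]
    rcases j with _ | j
    · simp
    · rw [Finset.sum_eq_single ⟨j, by omega⟩
        (fun k _ hk => if_neg fun h => hk (Fin.ext (by simp; omega))) (by simp)]
      simp
  · simp [Tmat, Fin.last]

theorem iterate_vecShift (m : ℕ) (v : Fin n → F) :
    (vecShift lam)^[m] v = v ᵥ* Tmat lam ^ m := by
  induction m with
  | zero => simp
  | succ m ih => rw [Function.iterate_succ_apply', ih, ← vecMul_Tmat, vecMul_vecMul, ← pow_succ]

theorem cir_row (a : Fin n → F) (i : Fin n) : cir lam a i = a ᵥ* Tmat lam ^ (i : ℕ) := by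
  ext j
  rw [cir, of_apply, iterate_vecShift]

theorem cir_row_zero (a : Fin n → F) (hn : 0 < n) : cir lam a ⟨0, hn⟩ = a := by
  rw [cir_row, pow_zero, vecMul_one]

theorem Tmat_row_of_lt {k : ℕ} (hk : k + 1 < n) :
    Tmat lam ⟨k, by omega⟩ = Pi.single ⟨k + 1, hk⟩ 1 := by
  ext j
  simp [Tmat, Pi.single_apply, Fin.ext_iff, show k ≠ n - 1 by omega, eq_comm]

theorem Tmat_row_last (hn : 0 < n) : Tmat lam ⟨n - 1, by omega⟩ = lam := by
  ext j
  simp [Tmat]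

theorem Tmat_pow_row_zero {k : ℕ} (hk : k < n) :
    (Tmat lam ^ k) ⟨0, by omega⟩ = Pi.single ⟨k, hk⟩ 1 := by
  induction k with
  | zero => ext j; simp [one_apply, Pi.single_apply, eq_comm]
  | succ k ih =>
    rw [pow_succ, mul_apply_eq_vecMul, ih (by omega), single_one_vecMul]
    exact Tmat_row_of_lt lam hk

theorem Tmat_pow_card_row_zero (hn : 0 < n) : (Tmat lam ^ n) ⟨0, hn⟩ = lam := by
  obtain ⟨m, rfl⟩ : ∃ m, n = m + 1 := ⟨n - 1, by omega⟩
  rw [pow_succ, mul_apply_eq_vecMul, Tmat_pow_row_zero lam (by omega), single_one_vecMul]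
  exact Tmat_row_last lam hn

theorem row_eq_vecMul_Tmat_pow_of_commute {M : Matrix (Fin n) (Fin n) F}
    (hM : Commute (Tmat lam) M) (i : Fin n) :
    M i = M ⟨0, i.pos⟩ ᵥ* Tmat lam ^ (i : ℕ) := by
  calc M i = (Tmat lam ^ (i : ℕ) * M) ⟨0, i.pos⟩ := by
        rw [mul_apply_eq_vecMul, Tmat_pow_row_zero lam i.isLt, single_one_vecMul]; rfl
    _ = (M * Tmat lam ^ (i : ℕ)) ⟨0, i.pos⟩ := by rw [(hM.pow_left _).eq]
    _ = M ⟨0, i.pos⟩ ᵥ* Tmat lam ^ (i : ℕ) := mul_apply_eq_vecMul _ _ _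

theorem cir_row_zero_of_commute {M : Matrix (Fin n) (Fin n) F}
    (hM : Commute (Tmat lam) M) (hn : 0 < n) : cir lam (M ⟨0, hn⟩) = M := by
  funext i
  rw [cir_row, row_eq_vecMul_Tmat_pow_of_commute lam hM i]

theorem aeval_Tmat_sum_row_zero (a : Fin n → F) (hn : 0 < n) :
    (aeval (Tmat lam) (∑ i : Fin n, C (a i) * X ^ (i : ℕ))) ⟨0, hn⟩ = a := by
  ext j
  simp [Matrix.sum_apply, ← Algebra.smul_def, Tmat_pow_row_zero, Pi.single_apply]

theorem cir_eq_aeval (a : Fin n → F) :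
    cir lam a = aeval (Tmat lam) (∑ i : Fin n, C (a i) * X ^ (i : ℕ)) := by
  rcases n.eq_zero_or_pos with rfl | hn
  · exact Subsingleton.elim _ _
  rw [← cir_row_zero_of_commute lam (commute_aeval_self _ _) hn, aeval_Tmat_sum_row_zero]

theorem aeval_Tmat_X_pow_sub :
    aeval (Tmat lam) (X ^ n - ∑ i : Fin n, C (lam i) * X ^ (i : ℕ)) = 0 := by
  rcases n.eq_zero_or_pos with rfl | hn
  · exact Subsingleton.elim _ _
  rw [map_sub, map_pow, aeval_X, ← cir_eq_aeval,
    ← cir_row_zero_of_commute lam ((Commute.refl _).pow_right n) hn, Tmat_pow_card_row_zero,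
    sub_self]

theorem eq_zero_of_aeval_Tmat_eq_zero {q : F[X]} (hq : q.degree < n)
    (h : aeval (Tmat lam) q = 0) : q = 0 := by
  have hsum : ∑ i : Fin n, C (q.coeff i) * X ^ (i : ℕ) = q := by
    rw [sum_fin (fun i c => C c * X ^ i) (by simp) hq, sum_C_mul_X_pow_eq]
  have hcir : cir lam (fun i : Fin n => q.coeff i) = 0 := by rw [cir_eq_aeval, hsum, h]
  have hcoeff (i : Fin n) : q.coeff i = 0 := by
    simpa only [cir_row_zero, Matrix.zero_apply] using congrFun (congrFun hcir ⟨0, i.pos⟩) i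
  rw [← hsum]
  simp [hcoeff]

theorem minpoly_Tmat : minpoly F (Tmat lam) = X ^ n - ∑ i : Fin n, C (lam i) * X ^ (i : ℕ) := by
  have hdeg : (X ^ n - ∑ i : Fin n, C (lam i) * X ^ (i : ℕ)).degree = (n : WithBot ℕ) := by
    rw [degree_sub_eq_left_of_degree_lt] <;> rw [degree_X_pow]
    exact degree_sum_fin_lt lam
  refine (minpoly.unique _ _ (monic_X_pow_sub (degree_sum_fin_lt lam)) (aeval_Tmat_X_pow_sub lam)
    fun q hq hq0 => ?_).symm
  rw [hdeg]
  exact le_of_not_gt fun hlt => hq.ne_zero (eq_zero_of_aeval_Tmat_eq_zero lam hlt hq0)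

end Circulant

theorem cir_algebra_iso_general {F : Type*} [Field F] {n : ℕ}
    (lam : Fin n → F) :
    ∃ e : (Polynomial F ⧸ Ideal.span
            {(X : Polynomial F) ^ n - ∑ i : Fin n, C (lam i) * X ^ (i : ℕ)})
          ≃ₐ[F] Algebra.adjoin F {Tmat lam},
      ∀ a : Fin n → F,
        (e (Ideal.Quotient.mk _ (∑ i : Fin n, C (a i) * X ^ (i : ℕ)))
          : Matrix (Fin n) (Fin n) F) = cir lam a :=
  ⟨quotientSpanEquivAdjoinSingleton (Tmat lam) (minpoly_Tmat lam), fun a => by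
    rw [coe_quotientSpanEquivAdjoinSingleton_mk, cir_eq_aeval]⟩

/-- Cir_{n,λ}(F_q) ≅ F_q[x]/⟨xⁿ - λ(x)⟩ as F_q-algebras, via
a(x) mod (xⁿ - λ(x)) ↦ cir_λ(a). -/
theorem cir_algebra_iso {F : Type*} [Field F] [Fintype F] {n : ℕ}
    (lam : Fin n → F) :
    ∃ e : (Polynomial F ⧸ Ideal.span
            {(X : Polynomial F) ^ n - ∑ i : Fin n, C (lam i) * X ^ (i : ℕ)})
          ≃ₐ[F] Algebra.adjoin F {Tmat lam},
      ∀ a : Fin n → F,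
        (e (Ideal.Quotient.mk _ (∑ i : Fin n, C (a i) * X ^ (i : ℕ)))
          : Matrix (Fin n) (Fin n) F) = cir lam a :=
  cir_algebra_iso_general lam
end

section
/- Any half-rate additive code over F_4, i.e., an additive subgroup C of F_4^n with |C| = 2^n, has minimum Hamming distance d satisfying d ≤ ⌊n/2⌋ + 1. -/
/-!
Two distinct codewords of an additive code differ by a nonzero codeword, so they are at Hamming
distance at least `d`. Hence deleting any `d - 1` coordinates is injective on the code (the
Singleton argument), and `2 ^ n = |C| ≤ 4 ^ (n - d + 1)` forces `d ≤ n / 2 + 1`.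
-/

open Matrix Polynomial

open Finset

theorem hammingDist_le_card_of_forall_notMem_eq {ι : Type*} [Fintype ι] {β : ι → Type*}
    [∀ i, DecidableEq (β i)] {x y : ∀ i, β i} {T : Finset ι} (h : ∀ i ∉ T, x i = y i) :
    hammingDist x y ≤ #T :=
  card_le_card fun i hi => by
    by_contra hiT
    exact (mem_filter.mp hi).2 (h i hiT)

theorem card_le_pow_of_le_hammingDist {ι α : Type*} [Fintype ι] [Fintype α] [DecidableEq α]
    (C : Set (ι → α)) {d : ℕ} (hC : ∀ x ∈ C, ∀ y ∈ C, x ≠ y → d ≤ hammingDist x y) :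
    Nat.card C ≤ Fintype.card α ^ (Fintype.card ι - (d - 1)) := by
  classical
  obtain ⟨T, -, hT⟩ := exists_subset_card_eq (s := (univ : Finset ι))
    (n := min (d - 1) (Fintype.card ι)) (by simp)
  let restrict : C → ({i // i ∉ T} → α) := fun x i => (x : ι → α) i
  have hinj : Function.Injective restrict := by
    rintro ⟨x, hx⟩ ⟨y, hy⟩ hxy
    by_contra hne
    have hxy' : x ≠ y := fun h => hne (Subtype.ext h)
    have hfar := hC x hx y hy hxy'
    have hnear := hammingDist_le_card_of_forall_notMem_eq (T := T) fun i hi =>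
      congr_fun hxy ⟨i, hi⟩
    have hpos := hammingDist_pos.mpr hxy'
    omega
  calc Nat.card C ≤ Nat.card ({i // i ∉ T} → α) := Nat.card_le_card_of_injective _ hinj
    _ = Fintype.card α ^ (Fintype.card ι - (d - 1)) := by
      rw [Nat.card_eq_fintype_card, Fintype.card_fun, Fintype.card_subtype_compl,
        Fintype.card_coe, hT]
      congr 1
      omega

theorem AddSubgroup.le_hammingDist_of_le_hammingNorm {ι α : Type*} [Fintype ι] [AddGroup α]
    [DecidableEq α] (C : AddSubgroup (ι → α)) {d : ℕ}
    (h : ∀ c ∈ C, c ≠ 0 → d ≤ hammingNorm c) :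
    ∀ x ∈ C, ∀ y ∈ C, x ≠ y → d ≤ hammingDist x y := fun x hx y hy hxy => by
  rw [hammingDist_eq_hammingNorm]
  exact h _ (C.add_mem (C.neg_mem hx) hy) (neg_add_eq_zero.not.mpr hxy)

/-- Singleton bound for half-rate additive codes over F₄: if C is an additive
subgroup of F₄ⁿ with |C| = 2ⁿ and minimum Hamming distance d, then d ≤ ⌊n/2⌋ + 1. -/
theorem additive_singleton_bound {F : Type*} [Field F] [Fintype F] [DecidableEq F]
    (hF : Fintype.card F = 4) {n : ℕ}
    (C : AddSubgroup (Fin n → F)) (hC : Nat.card C = 2 ^ n) (d : ℕ)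
    (hd : ∃ c ∈ C, c ≠ 0 ∧ hammingNorm c = d ∧
          ∀ c' ∈ C, c' ≠ 0 → d ≤ hammingNorm c') :
    d ≤ n / 2 + 1 := by
  obtain ⟨c, -, -, rfl, hmin⟩ := hd
  have hsingleton := card_le_pow_of_le_hammingDist (C : Set (Fin n → F))
    (C.le_hammingDist_of_le_hammingNorm hmin)
  have hweight : hammingNorm c ≤ n := by simpa using hammingNorm_le_card_fintype (x := c)
  rw [show Nat.card (C : Set (Fin n → F)) = 2 ^ n from hC, Fintype.card_fin, hF,
    show 4 = 2 ^ 2 from rfl, ← pow_mul, Nat.pow_le_pow_iff_right one_lt_two] at hsingleton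
  omega
end

section
/- The vector-circulant based additive code over F_4 of length 4 generated additively by the rows of cir_λ(v) with λ = (1, 0, 0, 1) and v = (1, α, 1, 1), where α is a primitive element of F_4, is a (4, 2^4, 3) additive code: it has exactly 2^4 codewords and minimum Hamming distance 3 (hence is extremal). -/
/-! In characteristic 2, `(a, b) ↦ a + b α` identifies `𝔽₂ × 𝔽₂` with `F` additively, and applied
coordinatewise it preserves Hamming weight. So the code is the image of the additive code generated
by four explicit vectors of `(𝔽₂ × 𝔽₂)⁴`, which is their `𝔽₂`-span. A finite check shows that every
nontrivial `𝔽₂`-combination of these vectors has weight at least 3; in particular they are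
independent, so the code has `2⁴` words, and the second row has weight exactly 3. -/

open Matrix Polynomial

open Function

theorem AddSubgroup.closure_eq_toAddSubgroup_span {M : Type*} [AddCommGroup M] (n : ℕ)
    [Module (ZMod n) M] (s : Set M) :
    AddSubgroup.closure s = (Submodule.span (ZMod n) s).toAddSubgroup :=
  le_antisymm (AddSubgroup.closure_le _ |>.mpr Submodule.subset_span)
    fun _ hx => (Submodule.span_le (p := AddSubgroup.toZModSubmodule n (closure s)) |>.mpr
      AddSubgroup.subset_closure) hx

theorem AddSubgroup.mem_closure_range_iff_exists_sum_smul {ι M : Type*} [Fintype ι]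
    [AddCommGroup M] (n : ℕ) [Module (ZMod n) M] (v : ι → M) {x : M} :
    x ∈ AddSubgroup.closure (Set.range v) ↔ ∃ ε : ι → ZMod n, ∑ i, ε i • v i = x := by
  rw [AddSubgroup.closure_eq_toAddSubgroup_span n, Submodule.mem_toAddSubgroup,
    Submodule.mem_span_range_iff_exists_fun]

theorem AddSubgroup.natCard_closure_range_of_linearIndependent {ι M : Type*} [Fintype ι]
    [AddCommGroup M] (p : ℕ) [Fact p.Prime] [Module (ZMod p) M] {v : ι → M}
    (hv : LinearIndependent (ZMod p) v) :
    Nat.card (AddSubgroup.closure (Set.range v)) = p ^ Fintype.card ι := by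
  rw [AddSubgroup.closure_eq_toAddSubgroup_span p]
  change Nat.card (Submodule.span (ZMod p) (Set.range v)) = _
  have := Module.Finite.span_of_finite (ZMod p) (Set.finite_range v)
  rw [Module.natCard_eq_pow_finrank (K := ZMod p), finrank_span_eq_card hv, Nat.card_zmod]

theorem hammingNorm_compLeft {ι A B : Type*} [Fintype ι] [AddZeroClass A] [AddZeroClass B]
    [DecidableEq A] [DecidableEq B] {f : A →+ B} (hf : Injective f) (x : ι → A) :
    hammingNorm (f.compLeft ι x) = hammingNorm x :=
  hammingNorm_comp (fun _ => f) (fun _ => hf) fun _ => map_zero f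

section PairToField

variable {F : Type*} [Ring F] [CharP F 2]

def pairToField (α : F) : ZMod 2 × ZMod 2 →+ F :=
  (ZMod.castHom dvd_rfl F).toAddMonoidHom.coprod
    ((AddMonoidHom.mulRight α).comp (ZMod.castHom dvd_rfl F).toAddMonoidHom)

theorem pairToField_apply (α : F) (x : ZMod 2 × ZMod 2) :
    pairToField α x = x.1.cast + x.2.cast * α := rfl

theorem pairToField_injective {α : F} (hα₀ : α ≠ 0) (hα₁ : α ≠ 1) :
    Injective (pairToField α) := by
  refine (injective_iff_map_eq_zero _).mpr fun ⟨a, b⟩ h => ?_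
  have := CharP.nontrivial_of_char_ne_one (R := F) (v := 2) (by decide)
  have h01 : ∀ c : ZMod 2, c = 0 ∨ c = 1 := by decide
  rcases h01 a with rfl | rfl <;> rcases h01 b with rfl | rfl <;>
    simp only [pairToField_apply, ZMod.cast_zero, ZMod.cast_one', zero_mul, one_mul, zero_add,
      add_zero] at h
  · rfl
  · exact absurd h hα₀
  · exact absurd h one_ne_zero
  · exact absurd (CharTwo.add_eq_zero.mp h).symm hα₁

end PairToField

-- The rows `(1, α, 1, 1), (1, 1, α, 0), (0, 1, 1, α), (α, 0, 1, 1 + α)` of `cir λ v`, each entry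
-- `a + b α` written as `(a, b)`.
def binaryRows : Fin 4 → Fin 4 → ZMod 2 × ZMod 2 :=
  ![![(1, 0), (0, 1), (1, 0), (1, 0)], ![(1, 0), (1, 0), (0, 1), (0, 0)],
    ![(0, 0), (1, 0), (1, 0), (0, 1)], ![(0, 1), (0, 0), (1, 0), (1, 1)]]

theorem three_le_hammingNorm_sum_smul_binaryRows :
    ∀ ε : Fin 4 → ZMod 2, ε ≠ 0 → 3 ≤ hammingNorm (∑ i, ε i • binaryRows i) := by
  decide

theorem linearIndependent_binaryRows : LinearIndependent (ZMod 2) binaryRows :=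
  Fintype.linearIndependent_iff.mpr fun ε hε => funext_iff.mp <| by_contra fun hε₀ => by
    simpa [hε] using three_le_hammingNorm_sum_smul_binaryRows ε hε₀

theorem cir_eq_pairToField {F : Type*} [Field F] [CharP F 2] (α : F) :
    (fun i j => cir ![1, 0, 0, 1] ![1, α, 1, 1] i j) = fun i => pairToField α ∘ binaryRows i := by
  ext i j
  fin_cases i <;> fin_cases j <;>
    simp [cir, vecShift, binaryRows, pairToField_apply, CharTwo.add_self_eq_zero]

theorem hammingNorm_binaryRows_one : hammingNorm (binaryRows 1) = 3 := by
  decide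

/-- The vector-circulant based additive code over F₄ of length 4 generated by
the rows of cir_λ(v), with λ = (1,0,0,1) and v = (1,α,1,1) for α a primitive
element of F₄ (i.e. α² = α + 1), is a (4, 2⁴, 3) additive code. -/
theorem vector_circulant_code_4 {F : Type*} [Field F] [Fintype F] [DecidableEq F]
    (hF : Fintype.card F = 4) (α : F) (hα : α ^ 2 = α + 1) :
    let lam : Fin 4 → F := ![1, 0, 0, 1]
    let v : Fin 4 → F := ![1, α, 1, 1]
    let Code : AddSubgroup (Fin 4 → F) :=
      AddSubgroup.closure (Set.range fun i : Fin 4 => fun j => cir lam v i j)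
    Nat.card Code = 2 ^ 4 ∧
      (∀ c ∈ Code, c ≠ 0 → 3 ≤ hammingNorm c) ∧
      ∃ c ∈ Code, c ≠ 0 ∧ hammingNorm c = 3 := by
  intro lam v Code
  have : CharP F 2 := charP_of_card_eq_prime_pow (p := 2) (f := 2) hF
  have hα₀ : α ≠ 0 := by rintro rfl; simp at hα
  have hα₁ : α ≠ 1 := by rintro rfl; simp [CharTwo.add_self_eq_zero] at hα
  have hf := pairToField_injective hα₀ hα₁
  set E := (pairToField α).compLeft (Fin 4)
  have hCode : Code = (AddSubgroup.closure (Set.range binaryRows)).map E := by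
    rw [AddMonoidHom.map_closure, ← Set.range_comp]
    exact congrArg (AddSubgroup.closure ∘ Set.range) (cir_eq_pairToField α)
  refine ⟨?_, ?_, ?_⟩
  · rw [hCode, AddSubgroup.card_map_of_injective hf.comp_left,
      AddSubgroup.natCard_closure_range_of_linearIndependent 2 linearIndependent_binaryRows,
      Fintype.card_fin]
  · rintro _ hc hc0
    obtain ⟨_, hx, rfl⟩ := hCode ▸ hc
    obtain ⟨ε, rfl⟩ := (AddSubgroup.mem_closure_range_iff_exists_sum_smul 2 _).mp hx
    rw [hammingNorm_compLeft hf]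
    refine three_le_hammingNorm_sum_smul_binaryRows ε ?_
    rintro rfl
    simp at hc0
  · have hw : hammingNorm (E (binaryRows 1)) = 3 := by
      rw [hammingNorm_compLeft hf, hammingNorm_binaryRows_one]
    refine ⟨E (binaryRows 1), hCode ▸ AddSubgroup.mem_map_of_mem E
      (AddSubgroup.subset_closure ⟨1, rfl⟩), fun h0 => ?_, hw⟩
    simp [h0] at hw
end
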